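/- arXiv:1507.00070 — 5 statements merged into one kernel-verified Lean document; each statement's English description precedes it below -/
import Mathlib

section
/- Let r ∈ ℕ^m and c ∈ ℕ^n with Σ_i r_i = Σ_j c_j, and let X = (X_{ij}) be an m×n array of independent geometric random variables where X_{ij} has P(X_{ij} = k) = (1 − α_i β_j)(α_i β_j)^k, with 0 < α_i β_j < 1 for all i,j. Then for every (r,c)-contingency table ξ, P(X = ξ) = (∏_i α_i^{r_i}) (∏_j β_j^{c_j}) ∏_{i,j} (1 − α_i β_j). In particular, P(X = ξ) is the same for all (r,c)-contingency tables ξ, so the law of X conditioned on the event that X is an (r,c)-contingency table is the uniform distribution on the set of (r,c)-contingency tables. -/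
/-!
The density of the array at `ξ` factors as `∏ᵢⱼ (1 - αᵢβⱼ) · ∏ᵢⱼ (αᵢβⱼ)^{ξᵢⱼ}`, and the second
product regroups into `∏ᵢ αᵢ^{∑ⱼ ξᵢⱼ} · ∏ⱼ βⱼ^{∑ᵢ ξᵢⱼ}`, which depends on `ξ` only through its
margins. So all `(r,c)`-contingency tables, of which there are finitely many, carry the same
positive mass, and conditioning on them gives the uniform law.
-/

open MeasureTheory ProbabilityTheory ENNReal

/-- The set of `(r,c)`-contingency tables: `m × n` matrices of nonnegative integers with
row sums `r` and column sums `c`. -/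
def contingencyTables (m n : ℕ) (r : Fin m → ℕ) (c : Fin n → ℕ) :
    Set (Fin m → Fin n → ℕ) :=
  {ξ | (∀ i, ∑ j, ξ i j = r i) ∧ (∀ j, ∑ i, ξ i j = c j)}

open Finset

section ContingencyTables

variable {m n : ℕ} {r : Fin m → ℕ} {c : Fin n → ℕ}

lemma contingencyTables_finite : (contingencyTables m n r c).Finite := by
  refine (Set.Finite.pi fun i => Set.Finite.pi fun _ => Set.finite_Iic (r i)).subset ?_
  rintro ξ ⟨hrow, -⟩ i - j -
  exact (single_le_sum (fun _ _ => Nat.zero_le _) (mem_univ j)).trans_eq (hrow i)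

lemma prod_prod_mul_pow_of_mem_contingencyTables {M : Type*} [CommMonoid M]
    (w : Fin m → Fin n → M) (a : Fin m → M) (b : Fin n → M) {ξ : Fin m → Fin n → ℕ}
    (hξ : ξ ∈ contingencyTables m n r c) :
    ∏ i, ∏ j, w i j * (a i * b j) ^ ξ i j
      = (∏ i, a i ^ r i) * (∏ j, b j ^ c j) * ∏ i, ∏ j, w i j := by
  obtain ⟨hrow, hcol⟩ := hξ
  have hcols : ∏ i, ∏ j, b j ^ ξ i j = ∏ j, b j ^ c j := by
    rw [prod_comm]
    simp_rw [prod_pow_eq_pow_sum, hcol]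
  simp_rw [mul_pow, prod_mul_distrib, prod_pow_eq_pow_sum, hrow, hcols]
  ac_rfl

end ContingencyTables

lemma ENNReal.prod_prod_ofReal {ι κ : Type*} (s : Finset ι) (t : Finset κ) (f : ι → κ → ℝ)
    (hf : ∀ i ∈ s, ∀ j ∈ t, 0 ≤ f i j) :
    ∏ i ∈ s, ∏ j ∈ t, ENNReal.ofReal (f i j) = ENNReal.ofReal (∏ i ∈ s, ∏ j ∈ t, f i j) := by
  rw [ofReal_prod_of_nonneg fun i hi => prod_nonneg (hf i hi)]
  exact prod_congr rfl fun i hi => (ofReal_prod_of_nonneg (hf i hi)).symm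

lemma ProbabilityTheory.cond_singleton_eq_inv_ncard {Ω : Type*} [MeasurableSpace Ω]
    [MeasurableSingletonClass Ω] {μ : Measure Ω} [IsFiniteMeasure μ] {s : Set Ω} {x : Ω}
    (hs : s.Finite) (hconst : ∀ y ∈ s, μ {y} = μ {x}) (hx0 : μ {x} ≠ 0) (hx : x ∈ s) :
    μ[|s] {x} = (s.ncard : ℝ≥0∞)⁻¹ := by
  have hμs : μ s = s.ncard * μ {x} := by
    calc μ s = ∑ y ∈ hs.toFinset, μ {y} := by rw [sum_measure_singleton, hs.coe_toFinset]
      _ = s.ncard * μ {x} := by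
        rw [sum_congr rfl fun y hy => hconst y (hs.mem_toFinset.1 hy), sum_const, nsmul_eq_mul,
          Set.ncard_eq_toFinset_card s hs]
  rw [cond_apply hs.measurableSet, Set.inter_eq_right.2 (Set.singleton_subset_iff.2 hx), hμs,
    ENNReal.mul_inv (Or.inr (measure_ne_top μ _)) (Or.inr hx0), mul_assoc,
    ENNReal.inv_mul_cancel hx0 (measure_ne_top μ _), mul_one]

theorem stmt_1_general (m n : ℕ) (r : Fin m → ℕ) (c : Fin n → ℕ)
    (α : Fin m → ℝ) (β : Fin n → ℝ)
    (hαβ0 : ∀ i j, 0 < α i * β j) (hαβ1 : ∀ i j, α i * β j < 1)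
    (μ : Measure (Fin m → Fin n → ℕ)) [IsProbabilityMeasure μ]
    (hμ : ∀ ξ : Fin m → Fin n → ℕ,
      μ {ξ} = ∏ i, ∏ j, ENNReal.ofReal ((1 - α i * β j) * (α i * β j) ^ (ξ i j))) :
    (∀ ξ ∈ contingencyTables m n r c,
      μ {ξ} = ENNReal.ofReal
        ((∏ i, α i ^ (r i)) * (∏ j, β j ^ (c j)) * ∏ i, ∏ j, (1 - α i * β j))) ∧
    (∀ ξ ∈ contingencyTables m n r c,
      μ[|contingencyTables m n r c] {ξ}
        = ((contingencyTables m n r c).ncard : ℝ≥0∞)⁻¹) := by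
  have hmass_pos : ∀ (k : ℕ) i j, 0 < (1 - α i * β j) * (α i * β j) ^ k := fun k i j =>
    mul_pos (sub_pos.2 (hαβ1 i j)) (pow_pos (hαβ0 i j) k)
  have hmass : ∀ ξ ∈ contingencyTables m n r c, μ {ξ} = ENNReal.ofReal
      ((∏ i, α i ^ (r i)) * (∏ j, β j ^ (c j)) * ∏ i, ∏ j, (1 - α i * β j)) := fun ξ hξ => by
    rw [hμ, ENNReal.prod_prod_ofReal _ _ _ fun i _ j _ => (hmass_pos _ i j).le,
      prod_prod_mul_pow_of_mem_contingencyTables _ _ _ hξ]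
  refine ⟨hmass, fun ξ hξ => cond_singleton_eq_inv_ncard contingencyTables_finite
    (fun η hη => by rw [hmass η hη, hmass ξ hξ]) ?_ hξ⟩
  rw [hμ, ENNReal.prod_prod_ofReal _ _ _ fun i _ j _ => (hmass_pos _ i j).le]
  exact (ENNReal.ofReal_pos.2 (prod_pos fun i _ => prod_pos fun j _ => hmass_pos _ i j)).ne'

/-- for an array of independent geometric random variables with parameters
`1 - α i * β j`, the probability of any fixed `(r,c)`-contingency table `ξ` is
`(∏ i, α i ^ r i) * (∏ j, β j ^ c j) * ∏ i j, (1 - α i * β j)`; in particular, the law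
conditioned on the set of `(r,c)`-contingency tables is uniform on that set. -/
theorem stmt_1 (m n : ℕ) (r : Fin m → ℕ) (c : Fin n → ℕ)
    (hrc : ∑ i, r i = ∑ j, c j)
    (α : Fin m → ℝ) (β : Fin n → ℝ)
    (hαβ0 : ∀ i j, 0 < α i * β j) (hαβ1 : ∀ i j, α i * β j < 1)
    (μ : Measure (Fin m → Fin n → ℕ)) [IsProbabilityMeasure μ]
    (hμ : ∀ ξ : Fin m → Fin n → ℕ,
      μ {ξ} = ∏ i, ∏ j, ENNReal.ofReal ((1 - α i * β j) * (α i * β j) ^ (ξ i j))) :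
    (∀ ξ ∈ contingencyTables m n r c,
      μ {ξ} = ENNReal.ofReal
        ((∏ i, α i ^ (r i)) * (∏ j, β j ^ (c j)) * ∏ i, ∏ j, (1 - α i * β j))) ∧
    (∀ ξ ∈ contingencyTables m n r c,
      μ[|contingencyTables m n r c] {ξ}
        = ((contingencyTables m n r c).ncard : ℝ≥0∞)⁻¹) :=
  stmt_1_general m n r c α β hαβ0 hαβ1 μ hμ
end

section
/- Let r ∈ ℝ_{≥0}^m and c ∈ ℝ_{≥0}^n with Σ_i r_i = Σ_j c_j, and let X = (X_{ij}) be an m×n array of independent exponential random variables where X_{ij} has rate λ_{ij} = −log(α_i β_j), with 0 < α_i β_j < 1 for all i,j. Then the joint density of X at any real-valued (r,c)-contingency table ξ equals (∏_i α_i^{r_i}) (∏_j β_j^{c_j}) ∏_{i,j} λ_{ij}; in particular the joint density of X is constant on the set of real-valued (r,c)-contingency tables. -/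
open Real Finset

/-! A factor `λ e^{-λx}` with `λ = -log (α β)` equals `λ (α β)^x`, and the product of `(α_i β_j)^{ξ_ij}`
over the table splits into row and column products whose exponents are the margins of `ξ`. -/

lemma prod_prod_mul_rpow_eq_prod_rpow_sum_mul_prod_rpow_sum {ι κ : Type*} [Fintype ι] [Fintype κ]
    {α : ι → ℝ} {β : κ → ℝ} (hα : ∀ i, 0 < α i) (hβ : ∀ j, 0 < β j) (ξ : ι → κ → ℝ) :
    ∏ i, ∏ j, (α i * β j) ^ ξ i j = (∏ i, α i ^ ∑ j, ξ i j) * ∏ j, β j ^ ∑ i, ξ i j := by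
  simp only [mul_rpow (hα _).le (hβ _).le, prod_mul_distrib, rpow_sum_of_pos (hα _),
    rpow_sum_of_pos (hβ _)]
  rw [prod_comm (f := fun i j => β j ^ ξ i j)]

lemma exp_neg_mul_eq_rpow_of_eq_neg_log {x y lam : ℝ} (hx : 0 < x) (hlam : lam = -Real.log x) :
    Real.exp (-lam * y) = x ^ y := by
  rw [rpow_def_of_pos hx, hlam, neg_neg]

theorem stmt_4_general (m n : ℕ) (r : Fin m → ℝ) (c : Fin n → ℝ)
    (α : Fin m → ℝ) (β : Fin n → ℝ) (hα : ∀ i, 0 < α i) (hβ : ∀ j, 0 < β j)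
    (lam : Fin m → Fin n → ℝ) (hlam : ∀ i j, lam i j = -Real.log (α i * β j))
    (ξ : Fin m → Fin n → ℝ)
    (hξr : ∀ i, ∑ j, ξ i j = r i) (hξc : ∀ j, ∑ i, ξ i j = c j) :
    ∏ i, ∏ j, lam i j * Real.exp (-(lam i j) * ξ i j)
      = (∏ i, α i ^ r i) * (∏ j, β j ^ c j) * ∏ i, ∏ j, lam i j := by
  calc ∏ i, ∏ j, lam i j * Real.exp (-(lam i j) * ξ i j)
      = ∏ i, ∏ j, lam i j * (α i * β j) ^ ξ i j := by
        simp only [fun i j => exp_neg_mul_eq_rpow_of_eq_neg_log (mul_pos (hα i) (hβ j)) (hlam i j)]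
    _ = (∏ i, ∏ j, (α i * β j) ^ ξ i j) * ∏ i, ∏ j, lam i j := by
        simp only [prod_mul_distrib, mul_comm]
    _ = (∏ i, α i ^ r i) * (∏ j, β j ^ c j) * ∏ i, ∏ j, lam i j := by
        rw [prod_prod_mul_rpow_eq_prod_rpow_sum_mul_prod_rpow_sum hα hβ]
        simp only [hξr, hξc]

/-- for an array of independent exponential random variables `X i j` with rates
`λ i j = -log (α i * β j)`, the joint density `∏ i j, λ i j * exp (-(λ i j) * ξ i j)`
at any real-valued `(r,c)`-contingency table `ξ` equals
`(∏ i, α i ^ r i) * (∏ j, β j ^ c j) * ∏ i j, λ i j`; in particular it is constant on the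
set of real-valued `(r,c)`-contingency tables. -/
theorem stmt_4 (m n : ℕ) (r : Fin m → ℝ) (c : Fin n → ℝ)
    (hr : ∀ i, 0 ≤ r i) (hc : ∀ j, 0 ≤ c j) (hrc : ∑ i, r i = ∑ j, c j)
    (α : Fin m → ℝ) (β : Fin n → ℝ) (hα : ∀ i, 0 < α i) (hβ : ∀ j, 0 < β j)
    (hαβ1 : ∀ i j, α i * β j < 1)
    (lam : Fin m → Fin n → ℝ) (hlam : ∀ i j, lam i j = -Real.log (α i * β j))
    (ξ : Fin m → Fin n → ℝ) (hξ0 : ∀ i j, 0 ≤ ξ i j)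
    (hξr : ∀ i, ∑ j, ξ i j = r i) (hξc : ∀ j, ∑ i, ξ i j = c j) :
    ∏ i, ∏ j, lam i j * Real.exp (-(lam i j) * ξ i j)
      = (∏ i, α i ^ r i) * (∏ j, β j ^ c j) * ∏ i, ∏ j, lam i j :=
  stmt_4_general m n r c α β hα hβ lam hlam ξ hξr hξc
end

section
/- (Probabilistic divide-and-conquer) Let μ and ν be probability measures on measurable spaces 𝒳 and 𝒴, and let E ⊆ 𝒳 × 𝒴 be measurable with (μ × ν)(E) > 0. For a ∈ 𝒳 write E_a = {b ∈ 𝒴 : (a,b) ∈ E}. Let μ' be the 𝒳-marginal of the conditional measure (μ × ν)(· | E), and for μ'-almost every a let ν_a be the measure ν conditioned on E_a (which is well-defined since ν(E_a) > 0 for μ'-almost every a). Then the probability measure on 𝒳 × 𝒴 given by S ↦ ∫ ν_a({b : (a,b) ∈ S}) dμ'(a) equals the conditional measure (μ × ν)(· | E). -/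
/-!
The `𝒳`-marginal of `(μ × ν)(· | E)` has density `a ↦ ν(E_a) / (μ × ν)(E)` with respect to `μ`.
Against this density, `ν(S_a | E_a)` becomes `ν(E_a ∩ S_a) / (μ × ν)(E)` (also where
`ν(E_a) = 0`, both sides then vanishing), and integrating `ν((E ∩ S)_a)` over `μ` gives
`(μ × ν)(E ∩ S)`.
-/

open MeasureTheory ProbabilityTheory

section

variable {α β : Type*} [MeasurableSpace α] [MeasurableSpace β] {μ : Measure α} {ν : Measure β}
  [SFinite ν] {E : Set (α × β)}

theorem MeasureTheory.Measure.map_fst_restrict_prod (hE : MeasurableSet E) :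
    ((μ.prod ν).restrict E).map Prod.fst = μ.withDensity fun a ↦ ν (Prod.mk a ⁻¹' E) := by
  ext A hA
  rw [Measure.map_apply measurable_fst hA, Measure.restrict_apply (measurable_fst hA),
    Measure.prod_apply ((measurable_fst hA).inter hE), withDensity_apply _ hA,
    ← lintegral_indicator hA]
  congr 1 with a
  by_cases ha : a ∈ A <;> simp [Set.preimage_preimage, ha]

theorem ProbabilityTheory.map_fst_cond_prod (hE : MeasurableSet E) :
    ((μ.prod ν)[|E]).map Prod.fst
      = ((μ.prod ν) E)⁻¹ • μ.withDensity fun a ↦ ν (Prod.mk a ⁻¹' E) := by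
  rw [ProbabilityTheory.cond, Measure.map_smul, Measure.map_fst_restrict_prod hE]

theorem ProbabilityTheory.measurable_cond_prodMk_left {S : Set (α × β)}
    (hE : MeasurableSet E) (hS : MeasurableSet S) :
    Measurable fun a ↦ ν[Prod.mk a ⁻¹' S | Prod.mk a ⁻¹' E] := by
  simp_rw [cond_apply (measurable_prodMk_left hE), ← Set.preimage_inter]
  exact (measurable_measure_prodMk_left hE).inv.mul (measurable_measure_prodMk_left (hE.inter hS))

end

theorem stmt_7_general {𝒳 𝒴 : Type*} [MeasurableSpace 𝒳] [MeasurableSpace 𝒴]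
    (μ : Measure 𝒳) (ν : Measure 𝒴)
    [IsProbabilityMeasure ν]
    (E : Set (𝒳 × 𝒴)) (hE : MeasurableSet E) :
    ∀ S : Set (𝒳 × 𝒴), MeasurableSet S →
      ∫⁻ a, (ν[|{b | (a, b) ∈ E}]) {b | (a, b) ∈ S} ∂(((μ.prod ν)[|E]).map Prod.fst)
        = ((μ.prod ν)[|E]) S := by
  intro S hS
  change ∫⁻ a, ν[Prod.mk a ⁻¹' S | Prod.mk a ⁻¹' E] ∂_ = _
  rw [map_fst_cond_prod hE, lintegral_smul_measure, lintegral_withDensity_eq_lintegral_mul _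
    (measurable_measure_prodMk_left hE) (measurable_cond_prodMk_left hE hS)]
  simp only [Pi.mul_apply, mul_comm (ν _), cond_mul_eq_inter (measurable_prodMk_left hE)]
  rw [cond_apply hE, Measure.prod_apply (hE.inter hS)]
  rfl

/-- Probabilistic divide-and-conquer: let `μ`, `ν` be probability measures on
`𝒳`, `𝒴`, and `E ⊆ 𝒳 × 𝒴` measurable with `(μ.prod ν) E > 0`.  Let `μ'` be the
`𝒳`-marginal of the conditional measure `(μ.prod ν)[|E]`, and for `a : 𝒳` let `ν_a` be `ν`
conditioned on the section `E_a = {b | (a, b) ∈ E}`.  Then for every measurable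
`S ⊆ 𝒳 × 𝒴`, `∫⁻ a, ν_a {b | (a,b) ∈ S} ∂μ' = (μ.prod ν)[|E] S`, i.e. the two-stage PDC
measure coincides with the conditional measure. -/
theorem stmt_7 {𝒳 𝒴 : Type*} [MeasurableSpace 𝒳] [MeasurableSpace 𝒴]
    (μ : Measure 𝒳) (ν : Measure 𝒴)
    [IsProbabilityMeasure μ] [IsProbabilityMeasure ν]
    (E : Set (𝒳 × 𝒴)) (hE : MeasurableSet E) (hEpos : 0 < (μ.prod ν) E) :
    ∀ S : Set (𝒳 × 𝒴), MeasurableSet S →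
      ∫⁻ a, (ν[|{b | (a, b) ∈ E}]) {b | (a, b) ∈ S} ∂(((μ.prod ν)[|E]).map Prod.fst)
        = ((μ.prod ν)[|E]) S :=
  stmt_7_general μ ν E hE
end

section
/- Let r ∈ ℕ^2 and c ∈ ℕ^n with r_1 + r_2 = Σ_j c_j. Let x_{1,1},…,x_{1,n−1} be independent, with x_{1,j} uniform on {0,1,…,c_j}, and define x_{2,j} = c_j − x_{1,j} for j < n, x_{1,n} = r_1 − Σ_{j<n} x_{1,j}, and x_{2,n} = r_2 − Σ_{j<n} x_{2,j}. Then for every 2×n (r,c)-contingency table ξ, P(x = ξ) = 1/∏_{j=1}^{n−1}(c_j + 1). In particular, conditioned on the event {x_{1,n} ≥ 0 and x_{2,n} ≥ 0}, the matrix x is uniformly distributed over the set of 2×n (r,c)-contingency tables. -/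
/-! Completing a top row `v` with `v j ≤ c j` always yields a matrix with the prescribed row and
column sums, so it is an `(r,c)`-contingency table exactly when its last column is nonnegative;
conversely every contingency table arises from its own top row, and from no other. Hence each
table has probability `∏ j (c j + 1)⁻¹`, and conditioning on the nonnegativity of the last column
leaves the uniform distribution on the finitely many tables. -/

open MeasureTheory ProbabilityTheory ENNReal

/-- Given the top-row entries `v j` of the first `n` columns, the full `2 × (n+1)` matrix
produced by the sampler: `x 0 j = v j` and `x 1 j = c j - v j` for `j < n`, while the last
column is `x 0 n = r 0 - ∑ v j` and `x 1 n = r 1 - ∑ (c j - v j)` (entries in `ℤ` since the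
last column may be negative). -/
def tableOfTopRow (n : ℕ) (r : Fin 2 → ℕ) (c : Fin (n + 1) → ℕ) (v : Fin n → ℕ) :
    Fin 2 → Fin (n + 1) → ℤ := fun i j =>
  if h : (j : ℕ) < n then
    (if i = 0 then (v ⟨j, h⟩ : ℤ) else (c j : ℤ) - (v ⟨j, h⟩ : ℤ))
  else
    (if i = 0 then (r 0 : ℤ) - ∑ j', (v j' : ℤ)
     else (r 1 : ℤ) - ∑ j', ((c j'.castSucc : ℤ) - (v j' : ℤ)))

/-- The set of `2 × (n+1)` `(r,c)`-contingency tables, viewed inside integer matrices. -/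
def intTables (n : ℕ) (r : Fin 2 → ℕ) (c : Fin (n + 1) → ℕ) :
    Set (Fin 2 → Fin (n + 1) → ℤ) :=
  {ξ | (∀ i j, 0 ≤ ξ i j) ∧ (∀ i, ∑ j, ξ i j = (r i : ℤ)) ∧ (∀ j, ∑ i, ξ i j = (c j : ℤ))}

section MeasureLemmas

variable {α : Type*} [MeasurableSpace α] [MeasurableSingletonClass α] {ν : Measure α}
  {t : Set α} {p : ℝ≥0∞}

lemma measure_eq_ncard_mul_of_measure_singleton (ht : t.Finite) (hν : ∀ x ∈ t, ν {x} = p) :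
    ν t = t.ncard * p := by
  have hsum := sum_measure_singleton (μ := ν) (s := ht.toFinset)
  rw [ht.coe_toFinset] at hsum
  rw [Set.ncard_eq_toFinset_card t ht, ← hsum,
    Finset.sum_congr rfl fun x hx => hν x (ht.mem_toFinset.1 hx), Finset.sum_const, nsmul_eq_mul]

lemma cond_singleton_eq_inv_ncard {s : Set α} (hs : MeasurableSet s) (ht : t.Finite)
    (hst : ν s = ν t) (hp0 : p ≠ 0) (hp : p ≠ ∞) (hν : ∀ x ∈ t, ν {x} = p) {x : α}
    (hxt : x ∈ t) (hxs : x ∈ s) : ν[|s] {x} = (t.ncard : ℝ≥0∞)⁻¹ := by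
  rw [cond_apply hs, Set.inter_eq_self_of_subset_right (Set.singleton_subset_iff.2 hxs),
    hst, measure_eq_ncard_mul_of_measure_singleton ht hν, hν x hxt,
    ENNReal.mul_inv (Or.inr hp) (Or.inr hp0), mul_assoc, ENNReal.inv_mul_cancel hp0 hp, mul_one]

end MeasureLemmas

section TableOfTopRow

variable {n : ℕ} {r : Fin 2 → ℕ} {c : Fin (n + 1) → ℕ}

@[simp]
lemma tableOfTopRow_zero_castSucc (v : Fin n → ℕ) (j : Fin n) :
    tableOfTopRow n r c v 0 j.castSucc = v j := by
  simp [tableOfTopRow]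

@[simp]
lemma tableOfTopRow_one_castSucc (v : Fin n → ℕ) (j : Fin n) :
    tableOfTopRow n r c v 1 j.castSucc = (c j.castSucc : ℤ) - v j := by
  simp [tableOfTopRow]

@[simp]
lemma tableOfTopRow_zero_last (v : Fin n → ℕ) :
    tableOfTopRow n r c v 0 (Fin.last n) = (r 0 : ℤ) - ∑ j, (v j : ℤ) := by
  simp [tableOfTopRow]

@[simp]
lemma tableOfTopRow_one_last (v : Fin n → ℕ) :
    tableOfTopRow n r c v 1 (Fin.last n) = (r 1 : ℤ) - ∑ j, ((c j.castSucc : ℤ) - v j) := by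
  simp [tableOfTopRow]

lemma sum_tableOfTopRow_row (v : Fin n → ℕ) (i : Fin 2) :
    ∑ j, tableOfTopRow n r c v i j = r i := by
  rw [Fin.sum_univ_castSucc]
  fin_cases i <;> simp

lemma sum_tableOfTopRow_col (hrc : r 0 + r 1 = ∑ j, c j) (v : Fin n → ℕ) (j : Fin (n + 1)) :
    ∑ i, tableOfTopRow n r c v i j = c j := by
  rw [Fin.sum_univ_two]
  induction j using Fin.lastCases with
  | last =>
    have hrc' : (r 0 + r 1 : ℤ) = ∑ j : Fin n, (c j.castSucc : ℤ) + c (Fin.last n) := by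
      exact_mod_cast hrc.trans (Fin.sum_univ_castSucc c)
    simp only [tableOfTopRow_zero_last, tableOfTopRow_one_last, Finset.sum_sub_distrib]
    linarith
  | cast j => simp

lemma tableOfTopRow_mem_intTables_iff (hrc : r 0 + r 1 = ∑ j, c j) (v : Fin n → ℕ) :
    tableOfTopRow n r c v ∈ intTables n r c ↔ ∀ i j, 0 ≤ tableOfTopRow n r c v i j :=
  ⟨fun h => h.1, fun h => ⟨h, sum_tableOfTopRow_row v, sum_tableOfTopRow_col hrc v⟩⟩

lemma tableOfTopRow_mem_intTables_iff_last (hrc : r 0 + r 1 = ∑ j, c j) {v : Fin n → ℕ}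
    (hv : ∀ j, v j ≤ c j.castSucc) :
    tableOfTopRow n r c v ∈ intTables n r c ↔
      0 ≤ tableOfTopRow n r c v 0 (Fin.last n) ∧ 0 ≤ tableOfTopRow n r c v 1 (Fin.last n) := by
  rw [tableOfTopRow_mem_intTables_iff hrc]
  refine ⟨fun h => ⟨h 0 _, h 1 _⟩, fun ⟨h0, h1⟩ i j => ?_⟩
  induction j using Fin.lastCases with
  | last => fin_cases i <;> assumption
  | cast j => fin_cases i <;> simp [hv j]

lemma tableOfTopRow_injective (n : ℕ) (r : Fin 2 → ℕ) (c : Fin (n + 1) → ℕ) :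
    Function.Injective (tableOfTopRow n r c) := fun v w h => funext fun j => by
  simpa using congrFun (congrFun h 0) j.castSucc

def topRow (ξ : Fin 2 → Fin (n + 1) → ℤ) (j : Fin n) : ℕ := (ξ 0 j.castSucc).toNat

lemma topRow_le {ξ : Fin 2 → Fin (n + 1) → ℤ} (hξ : ξ ∈ intTables n r c) (j : Fin n) :
    topRow ξ j ≤ c j.castSucc := by
  have hcol := hξ.2.2 j.castSucc
  have h1 := hξ.1 1 j.castSucc
  rw [Fin.sum_univ_two] at hcol
  simp only [topRow]
  omega

lemma tableOfTopRow_topRow {ξ : Fin 2 → Fin (n + 1) → ℤ} (hξ : ξ ∈ intTables n r c) :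
    tableOfTopRow n r c (topRow ξ) = ξ := by
  have hv : ∀ j, ((topRow ξ j : ℕ) : ℤ) = ξ 0 j.castSucc := fun j =>
    Int.toNat_of_nonneg (hξ.1 0 j.castSucc)
  have hcol : ∀ j : Fin n, ξ 1 j.castSucc = c j.castSucc - ξ 0 j.castSucc := fun j => by
    linarith [(Fin.sum_univ_two _).symm.trans (hξ.2.2 j.castSucc)]
  have hrow : ∀ i, ξ i (Fin.last n) = r i - ∑ j : Fin n, ξ i j.castSucc := fun i => by
    linarith [(Fin.sum_univ_castSucc _).symm.trans (hξ.2.1 i)]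
  funext i j
  induction j using Fin.lastCases with
  | last => fin_cases i <;> simp [hv, hcol, hrow]
  | cast j => fin_cases i <;> simp [hv, hcol]

lemma preimage_tableOfTopRow_singleton {ξ : Fin 2 → Fin (n + 1) → ℤ}
    (hξ : ξ ∈ intTables n r c) :
    tableOfTopRow n r c ⁻¹' {ξ} = {topRow ξ} := by
  ext v
  rw [Set.mem_preimage, Set.mem_singleton_iff, Set.mem_singleton_iff,
    ← (tableOfTopRow_injective n r c).eq_iff, tableOfTopRow_topRow hξ]

lemma intTables_finite : (intTables n r c).Finite := by
  refine ((Set.Finite.pi fun j => Set.finite_Iic (c (Fin.castSucc j))).image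
    (tableOfTopRow n r c)).subset fun ξ hξ =>
      ⟨topRow ξ, fun j _ => topRow_le hξ j, tableOfTopRow_topRow hξ⟩

end TableOfTopRow

theorem stmt_9_general (n : ℕ) (r : Fin 2 → ℕ) (c : Fin (n + 1) → ℕ)
    (hrc : r 0 + r 1 = ∑ j, c j)
    (μ : Measure (Fin n → ℕ))
    (hμ : ∀ v : Fin n → ℕ,
      μ {v} = if ∀ j, v j ≤ c j.castSucc
        then ∏ j : Fin n, ((c j.castSucc : ℝ≥0∞) + 1)⁻¹ else 0) :
    (∀ ξ ∈ intTables n r c,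
      (μ.map (tableOfTopRow n r c)) {ξ} = ∏ j : Fin n, ((c j.castSucc : ℝ≥0∞) + 1)⁻¹) ∧
    (∀ ξ ∈ intTables n r c,
      (μ.map (tableOfTopRow n r c))[|{A : Fin 2 → Fin (n + 1) → ℤ |
          0 ≤ A 0 (Fin.last n) ∧ 0 ≤ A 1 (Fin.last n)}] {ξ}
        = ((intTables n r c).ncard : ℝ≥0∞)⁻¹) := by
  set p : ℝ≥0∞ := ∏ j : Fin n, ((c j.castSucc : ℝ≥0∞) + 1)⁻¹
  have hp0 : p ≠ 0 := Finset.prod_ne_zero_iff.2 fun j _ => ENNReal.inv_ne_zero.2 (by simp)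
  have hp : p ≠ ∞ := ENNReal.prod_ne_top fun j _ => ENNReal.inv_ne_top.2 (by simp)
  have hf : Measurable (tableOfTopRow n r c) := measurable_of_countable _
  have hmap : ∀ ξ ∈ intTables n r c, μ.map (tableOfTopRow n r c) {ξ} = p := fun ξ hξ => by
    rw [Measure.map_apply hf .of_discrete, preimage_tableOfTopRow_singleton hξ, hμ,
      if_pos (topRow_le hξ)]
  refine ⟨hmap, fun ξ hξ => cond_singleton_eq_inv_ncard .of_discrete intTables_finite ?_ hp0 hp
    hmap hξ ⟨hξ.1 0 _, hξ.1 1 _⟩⟩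
  rw [Measure.map_apply hf .of_discrete, Measure.map_apply hf .of_discrete]
  refine measure_congr (Filter.eventuallyEq_set.2 (ae_iff_of_countable.2 fun v hv => ?_))
  have hle : ∀ j, v j ≤ c j.castSucc := by
    by_contra h
    exact hv (by rw [hμ, if_neg h])
  exact (tableOfTopRow_mem_intTables_iff_last hrc hle).symm

/-- sample the first `n` top-row entries independently, `v j` uniform on
`{0, …, c j}`, and complete the `2 × (n+1)` table deterministically.  Then every
`(r,c)`-contingency table `ξ` is produced with probability `∏ j (c j + 1)⁻¹`; in particular,
conditioned on the last column being nonnegative, the resulting table is uniformly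
distributed over the set of `2 × (n+1)` `(r,c)`-contingency tables. -/
theorem stmt_9 (n : ℕ) (r : Fin 2 → ℕ) (c : Fin (n + 1) → ℕ)
    (hrc : r 0 + r 1 = ∑ j, c j)
    (μ : Measure (Fin n → ℕ)) [IsProbabilityMeasure μ]
    (hμ : ∀ v : Fin n → ℕ,
      μ {v} = if ∀ j, v j ≤ c j.castSucc
        then ∏ j : Fin n, ((c j.castSucc : ℝ≥0∞) + 1)⁻¹ else 0) :
    (∀ ξ ∈ intTables n r c,
      (μ.map (tableOfTopRow n r c)) {ξ} = ∏ j : Fin n, ((c j.castSucc : ℝ≥0∞) + 1)⁻¹) ∧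
    (∀ ξ ∈ intTables n r c,
      (μ.map (tableOfTopRow n r c))[|{A : Fin 2 → Fin (n + 1) → ℤ |
          0 ≤ A 0 (Fin.last n) ∧ 0 ≤ A 1 (Fin.last n)}] {ξ}
        = ((intTables n r c).ncard : ℝ≥0∞)⁻¹) :=
  stmt_9_general n r c hrc μ hμ
end

section
/- Under the hypotheses of the central-limit corollary — S_n = Σ_{j=1}^{n−1} U_j^{(n)} with independent U_j^{(n)} uniform on {0,…,c_j^{(n)}}, (S_n − E S_n)/√Var(S_n) converging in distribution to standard normal, (r_1^{(n)} − c_n^{(n)} − E S_n)/√Var(S_n) → t ∈ ℝ — if additionally c_n^{(n)}/√Var(S_n) → λ with λ ∈ (0, ∞], then lim inf_n P(S_n ∈ [r_1^{(n)} − c_n^{(n)}, r_1^{(n)}]) > 0; in the case λ = ∞ the limit inferior is at least 1 − Φ(t). -/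
/-!
Write `Zₙ = (Sₙ - E Sₙ)/sₙ`. The event `Sₙ ∈ [r₁ - cₙ, r₁]` is `Zₙ ∈ [zₙ, zₙ + wₙ]` with
`zₙ = (r₁ - cₙ - E Sₙ)/sₙ → t` and `wₙ = cₙ/sₙ → λ`. For `t < a < b < t + λ` it eventually
contains `{a < Zₙ ≤ b}`, whose probability tends to `Φ b - Φ a > 0` by the central limit
hypothesis. When `λ = ∞` every `b` is admissible, and letting `b → ∞`, then `a ↓ t`, gives
the bound `1 - Φ t`.
-/

open MeasureTheory ProbabilityTheory Filter

/-- The standard normal cumulative distribution function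
`Φ(x) = (1/√(2π)) ∫_{-∞}^x e^{-u²/2} du`. -/
noncomputable def stdNormalCDF (x : ℝ) : ℝ :=
  (Real.sqrt (2 * Real.pi))⁻¹ * ∫ u in Set.Iic x, Real.exp (-(u ^ 2) / 2)

open Topology

theorem stdNormalCDF_eq_cdf_gaussianReal : stdNormalCDF = cdf (gaussianReal 0 1) := by
  ext x
  rw [cdf_eq_real, measureReal_def, gaussianReal_apply_eq_integral _ one_ne_zero,
    ENNReal.toReal_ofReal (setIntegral_nonneg measurableSet_Iic
      fun _ _ => gaussianPDFReal_nonneg _ _ _),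
    stdNormalCDF, ← integral_const_mul]
  simp [gaussianPDFReal, neg_div]

theorem stdNormalCDF_nonneg (x : ℝ) : 0 ≤ stdNormalCDF x :=
  stdNormalCDF_eq_cdf_gaussianReal ▸ cdf_nonneg _ x

theorem stdNormalCDF_strictMono : StrictMono stdNormalCDF := by
  intro a b hab
  have hpos : gaussianReal 0 1 (Set.Ioc a b) ≠ 0 := fun h =>
    (Real.volume_Ioc ▸ gaussianReal_absolutelyContinuous' 0 one_ne_zero h).not_gt
      (ENNReal.ofReal_pos.2 (sub_pos.2 hab))
  rw [← measure_cdf (gaussianReal 0 1), StieltjesFunction.measure_Ioc,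
    ENNReal.ofReal_ne_zero_iff] at hpos
  rw [stdNormalCDF_eq_cdf_gaussianReal]
  linarith

theorem tendsto_stdNormalCDF_atTop : Tendsto stdNormalCDF atTop (𝓝 1) :=
  stdNormalCDF_eq_cdf_gaussianReal ▸ tendsto_cdf_atTop _

theorem continuousWithinAt_stdNormalCDF_Ioi (x : ℝ) :
    ContinuousWithinAt stdNormalCDF (Set.Ioi x) x :=
  stdNormalCDF_eq_cdf_gaussianReal ▸ ((cdf _).right_continuous x).mono Set.Ioi_subset_Ici_self

theorem one_sub_stdNormalCDF_le {t ℓ : ℝ}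
    (h : ∀ a b, t < a → stdNormalCDF b - stdNormalCDF a ≤ ℓ) : 1 - stdNormalCDF t ≤ ℓ := by
  have hright : ∀ a, t < a → 1 - stdNormalCDF a ≤ ℓ := fun a ha =>
    le_of_tendsto (tendsto_stdNormalCDF_atTop.sub_const _) (Eventually.of_forall (h a · ha))
  exact le_of_tendsto (tendsto_const_nhds.sub (continuousWithinAt_stdNormalCDF_Ioi t))
    (eventually_nhdsWithin_of_forall hright)

theorem eventually_lt_of_tendsto_ofReal {ι : Type*} {l : Filter ι} {w : ι → ℝ} {lam : ENNReal}
    (hw : Tendsto (fun i => ENNReal.ofReal (w i)) l (𝓝 lam)) {L : ℝ}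
    (hL : ENNReal.ofReal L < lam) : ∀ᶠ i in l, L < w i :=
  (hw.eventually (eventually_gt_nhds hL)).mono fun _ h => (ENNReal.ofReal_lt_ofReal_iff'.1 h).1

theorem le_and_le_of_lt_div_of_div_le {x m s lo hi a b : ℝ} (hs : 0 < s)
    (hlo : (lo - m) / s ≤ a) (hhi : b ≤ (hi - m) / s)
    (hx : a < (x - m) / s ∧ (x - m) / s ≤ b) : lo ≤ x ∧ x ≤ hi := by
  constructor
  · have := (div_lt_div_iff_of_pos_right hs).1 (hlo.trans_lt hx.1)
    linarith
  · have := (div_le_div_iff_of_pos_right hs).1 (hx.2.trans hhi)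
    linarith

section Standardized

variable {Ω : Type*} [MeasurableSpace Ω] {P : Measure Ω}

theorem sub_le_liminf_measureReal_of_tendsto [IsFiniteMeasure P] {Z : ℕ → Ω → ℝ} {F : ℝ → ℝ}
    (hF : ∀ x, Tendsto (fun n => P.real {ω | Z n ω ≤ x}) atTop (𝓝 (F x)))
    {A : ℕ → Set Ω} {a b : ℝ} (hA : ∀ᶠ n in atTop, {ω | a < Z n ω ∧ Z n ω ≤ b} ⊆ A n) :
    F b - F a ≤ liminf (fun n => P.real (A n)) atTop := by
  have hle : ∀ᶠ n in atTop,
      P.real {ω | Z n ω ≤ b} - P.real {ω | Z n ω ≤ a} ≤ P.real (A n) := by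
    filter_upwards [hA] with n hn
    have hsub : {ω | Z n ω ≤ b} ⊆ {ω | Z n ω ≤ a} ∪ A n := fun ω hω =>
      (le_or_gt (Z n ω) a).imp id fun h => hn ⟨h, hω⟩
    linarith [(measureReal_mono (μ := P) hsub).trans (measureReal_union_le _ _)]
  have htend := (hF b).sub (hF a)
  rw [← htend.liminf_eq]
  exact liminf_le_liminf hle htend.isBoundedUnder_ge
    (isCoboundedUnder_ge_of_le atTop fun n => measureReal_mono (Set.subset_univ (A n)))

variable {X : ℕ → Ω → ℝ} {m s : ℕ → ℝ}

theorem eventually_pos_of_tendsto_measureReal_div_le (hs : ∀ n, 0 ≤ s n) {x y : ℝ}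
    (hx : x < 0) (hy : 0 < y)
    (h : Tendsto (fun n => P.real {ω | (X n ω - m n) / s n ≤ x}) atTop (𝓝 y)) :
    ∀ᶠ n in atTop, 0 < s n := by
  filter_upwards [h.eventually (eventually_ne_nhds hy.ne')] with n hn
  refine (hs n).lt_of_ne' fun h0 => hn ?_
  simp [h0, not_le.2 hx]

theorem sub_le_liminf_measureReal_Icc [IsFiniteMeasure P] {F : ℝ → ℝ}
    (hF : ∀ x, Tendsto (fun n => P.real {ω | (X n ω - m n) / s n ≤ x}) atTop (𝓝 (F x)))
    (hs : ∀ᶠ n in atTop, 0 < s n) {lo hi : ℕ → ℝ} {t a b : ℝ}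
    (hlo : Tendsto (fun n => (lo n - m n) / s n) atTop (𝓝 t)) (hta : t < a)
    (hhi : ∀ᶠ n in atTop, b ≤ (hi n - m n) / s n) :
    F b - F a ≤ liminf (fun n => P.real {ω | lo n ≤ X n ω ∧ X n ω ≤ hi n}) atTop := by
  refine sub_le_liminf_measureReal_of_tendsto hF ?_
  filter_upwards [hs, hlo.eventually (eventually_le_nhds hta), hhi] with n hsn hlon hhin
  exact fun ω => le_and_le_of_lt_div_of_div_le hsn hlon hhin

end Standardized

theorem stmt_14_general
    (Ω : Type*) [MeasurableSpace Ω] (P : Measure Ω) [IsProbabilityMeasure P]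
    (S : ℕ → Ω → ℕ)
    (mS sS : ℕ → ℝ)
    (hs : ∀ n, sS n = Real.sqrt (variance (fun ω => (S n ω : ℝ)) P))
    (r₁ cLast : ℕ → ℝ)
    (hCLT : ∀ x : ℝ, Tendsto
      (fun n => (P {ω | ((S n ω : ℝ) - mS n) / sS n ≤ x}).toReal) atTop
      (nhds (stdNormalCDF x)))
    (t : ℝ) (ht : Tendsto (fun n => (r₁ n - cLast n - mS n) / sS n) atTop (nhds t))
    (lam : ENNReal) (hlam0 : 0 < lam)
    (hlam : Tendsto (fun n => ENNReal.ofReal (cLast n / sS n)) atTop (nhds lam)) :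
    0 < Filter.liminf
        (fun n => (P {ω | r₁ n - cLast n ≤ (S n ω : ℝ) ∧ (S n ω : ℝ) ≤ r₁ n}).toReal)
        atTop ∧
    (lam = ⊤ → 1 - stdNormalCDF t ≤ Filter.liminf
        (fun n => (P {ω | r₁ n - cLast n ≤ (S n ω : ℝ) ∧ (S n ω : ℝ) ≤ r₁ n}).toReal)
        atTop) := by
  have hsS : ∀ᶠ n in atTop, 0 < sS n :=
    eventually_pos_of_tendsto_measureReal_div_le (fun n => hs n ▸ Real.sqrt_nonneg _)
      neg_one_lt_zero ((stdNormalCDF_nonneg _).trans_lt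
        (stdNormalCDF_strictMono (by norm_num : (-2 : ℝ) < -1))) (hCLT (-1))
  have window : ∀ a L δ, t < a → 0 < δ → ENNReal.ofReal L < lam →
      stdNormalCDF (t - δ + L) - stdNormalCDF a ≤ Filter.liminf
        (fun n => (P {ω | r₁ n - cLast n ≤ (S n ω : ℝ) ∧ (S n ω : ℝ) ≤ r₁ n}).toReal)
        atTop := by
    intro a L δ ha hδ hL
    refine sub_le_liminf_measureReal_Icc hCLT hsS ht ha ?_
    filter_upwards [ht.eventually (eventually_gt_nhds (sub_lt_self t hδ)),
      eventually_lt_of_tendsto_ofReal hlam hL] with n hz hw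
    rw [show (r₁ n - mS n) / sS n = (r₁ n - cLast n - mS n) / sS n + cLast n / sS n by ring]
    linarith
  obtain ⟨L, -, hL0, hL⟩ := ENNReal.lt_iff_exists_real_btwn.1 hlam0
  have hLpos : 0 < L := ENNReal.ofReal_pos.1 hL0
  refine ⟨?_, fun hlam_top => one_sub_stdNormalCDF_le fun a b ha => ?_⟩
  · have hgap := stdNormalCDF_strictMono (by linarith : t + L / 3 < t - L / 3 + L)
    linarith [window (t + L / 3) L (L / 3) (by linarith) (by linarith) hL]
  · convert window a (b - t + 1) 1 ha one_pos (hlam_top ▸ ENNReal.ofReal_lt_top) using 3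
    ring

/-- under the hypotheses of the central-limit corollary, if additionally
`cₙ n / s n → λ` with `λ ∈ (0, ∞]` (the limit taken in `ℝ≥0∞`), then
`liminf P(S n ∈ [r₁ n - cₙ n, r₁ n]) > 0`, and when `λ = ∞` this liminf is at least
`1 - Φ(t)`. -/
theorem stmt_14
    (Ω : Type*) [MeasurableSpace Ω] (P : Measure Ω) [IsProbabilityMeasure P]
    (c : ℕ → ℕ → ℕ) (U : ℕ → ℕ → Ω → ℕ)
    (hUmeas : ∀ n j, Measurable (U n j))
    (hindep : ∀ n, iIndepFun (U n) P)
    (hUlaw : ∀ n j k, P {ω | U n j ω = k}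
      = if k ≤ c n j then ((c n j : ENNReal) + 1)⁻¹ else 0)
    (S : ℕ → Ω → ℕ) (hS : ∀ n ω, S n ω = ∑ j ∈ Finset.range (n - 1), U n j ω)
    (mS sS : ℕ → ℝ)
    (hm : ∀ n, mS n = ∫ ω, (S n ω : ℝ) ∂P)
    (hs : ∀ n, sS n = Real.sqrt (variance (fun ω => (S n ω : ℝ)) P))
    (r₁ cLast : ℕ → ℝ) (hr₁ : ∀ n, 0 ≤ r₁ n) (hcLast : ∀ n, 0 ≤ cLast n)
    (hCLT : ∀ x : ℝ, Tendsto
      (fun n => (P {ω | ((S n ω : ℝ) - mS n) / sS n ≤ x}).toReal) atTop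
      (nhds (stdNormalCDF x)))
    (t : ℝ) (ht : Tendsto (fun n => (r₁ n - cLast n - mS n) / sS n) atTop (nhds t))
    (lam : ENNReal) (hlam0 : 0 < lam)
    (hlam : Tendsto (fun n => ENNReal.ofReal (cLast n / sS n)) atTop (nhds lam)) :
    0 < Filter.liminf
        (fun n => (P {ω | r₁ n - cLast n ≤ (S n ω : ℝ) ∧ (S n ω : ℝ) ≤ r₁ n}).toReal)
        atTop ∧
    (lam = ⊤ → 1 - stdNormalCDF t ≤ Filter.liminf
        (fun n => (P {ω | r₁ n - cLast n ≤ (S n ω : ℝ) ∧ (S n ω : ℝ) ≤ r₁ n}).toReal)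
        atTop) :=
  stmt_14_general Ω P S mS sS hs r₁ cLast hCLT t ht lam hlam0 hlam
end
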